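/- Let ω1, ω2, ω3 be nonzero complex numbers with Im(ω1/ω2) > 0, Im(ω3/ω2) > 0 (so |q|, |p| < 1), let g_0,…,g_4 ∈ ℂ and 𝒜 = g_0 + ⋯ + g_4, and define Δ(u) = ∏_{n=0}^4 [Γ(e^{2πi (g_n+u)/ω2}; q,p) Γ(e^{2πi (g_n−u)/ω2}; q,p)] / [Γ(e^{4πi u/ω2}; q,p) Γ(e^{−4πi u/ω2}; q,p) Γ(e^{2πi (𝒜+u)/ω2}; q,p) Γ(e^{2πi (𝒜−u)/ω2}; q,p)]. Then for all u where both sides are defined, Δ(u+ω1)/Δ(u) = e^{2πi ω1/ω2} · [θ(e^{4πi (u+ω1)/ω2}; p) θ(e^{2πi (u+ω1−𝒜)/ω2}; p)] / [θ(e^{4πi u/ω2}; p) θ(e^{2πi (u+𝒜)/ω2}; p)] · ∏_{n=0}^4 θ(e^{2πi (u+g_n)/ω2}; p) / θ(e^{2πi (u+ω1−g_n)/ω2}; p). Moreover, denoting this right-hand side by R(u), one has R(u+ω2) = R(u) and R(u+ω3) = R(u); i.e. the ratio Δ(u+ω1)/Δ(u) is an elliptic function of u with periods ω2 and ω3. 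-/

import Mathlib

open Complex

/-- The infinite `q`-Pochhammer symbol `(a;p)_∞ = ∏_{n≥0} (1 - a pⁿ)`. -/
noncomputable def qPoch (a p : ℂ) : ℂ := ∏' n : ℕ, (1 - a * p ^ n)

/-- The theta function `θ(z;p) = (z;p)_∞ (p z⁻¹;p)_∞`. -/
noncomputable def theta (z p : ℂ) : ℂ := qPoch z p * qPoch (p * z⁻¹) p

/-- The elliptic gamma function `Γ(z;q,p)`. -/
noncomputable def ellGamma (z q p : ℂ) : ℂ :=
  ∏' jk : ℕ × ℕ, (1 - z⁻¹ * q ^ (jk.1 + 1) * p ^ (jk.2 + 1)) / (1 - z * q ^ jk.1 * p ^ jk.2)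

/-- The additive-form integrand `Δ(u)` of the elliptic beta integral, with
`q = e^{2πi ω1/ω2}`, `p = e^{2πi ω3/ω2}`, `𝒜 = Σ_n g_n`. -/
noncomputable def ellDelta (ω1 ω2 ω3 : ℂ) (g : Fin 5 → ℂ) (u : ℂ) : ℂ :=
  (∏ n, ellGamma (exp (2*(Real.pi:ℂ)*I*(g n + u)/ω2)) (exp (2*(Real.pi:ℂ)*I*ω1/ω2))
      (exp (2*(Real.pi:ℂ)*I*ω3/ω2)) *
    ellGamma (exp (2*(Real.pi:ℂ)*I*(g n - u)/ω2)) (exp (2*(Real.pi:ℂ)*I*ω1/ω2))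
      (exp (2*(Real.pi:ℂ)*I*ω3/ω2))) /
  (ellGamma (exp (4*(Real.pi:ℂ)*I*u/ω2)) (exp (2*(Real.pi:ℂ)*I*ω1/ω2))
      (exp (2*(Real.pi:ℂ)*I*ω3/ω2)) *
   ellGamma (exp (-(4*(Real.pi:ℂ)*I*u)/ω2)) (exp (2*(Real.pi:ℂ)*I*ω1/ω2))
      (exp (2*(Real.pi:ℂ)*I*ω3/ω2)) *
   ellGamma (exp (2*(Real.pi:ℂ)*I*((∑ n, g n) + u)/ω2)) (exp (2*(Real.pi:ℂ)*I*ω1/ω2))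
      (exp (2*(Real.pi:ℂ)*I*ω3/ω2)) *
   ellGamma (exp (2*(Real.pi:ℂ)*I*((∑ n, g n) - u)/ω2)) (exp (2*(Real.pi:ℂ)*I*ω1/ω2))
      (exp (2*(Real.pi:ℂ)*I*ω3/ω2)))

/-- The elliptic function `R(u)` giving the ratio `Δ(u+ω1)/Δ(u)`. -/
noncomputable def ellR (ω1 ω2 ω3 : ℂ) (g : Fin 5 → ℂ) (u : ℂ) : ℂ :=
  exp (2*(Real.pi:ℂ)*I*ω1/ω2) *
    (theta (exp (4*(Real.pi:ℂ)*I*(u + ω1)/ω2)) (exp (2*(Real.pi:ℂ)*I*ω3/ω2)) *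
     theta (exp (2*(Real.pi:ℂ)*I*(u + ω1 - ∑ n, g n)/ω2)) (exp (2*(Real.pi:ℂ)*I*ω3/ω2))) /
    (theta (exp (4*(Real.pi:ℂ)*I*u/ω2)) (exp (2*(Real.pi:ℂ)*I*ω3/ω2)) *
     theta (exp (2*(Real.pi:ℂ)*I*(u + ∑ n, g n)/ω2)) (exp (2*(Real.pi:ℂ)*I*ω3/ω2))) *
    ∏ n, theta (exp (2*(Real.pi:ℂ)*I*(u + g n)/ω2)) (exp (2*(Real.pi:ℂ)*I*ω3/ω2)) /
      theta (exp (2*(Real.pi:ℂ)*I*(u + ω1 - g n)/ω2)) (exp (2*(Real.pi:ℂ)*I*ω3/ω2))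

/-- No denominator factor of the elliptic gamma function `Γ(z;q,p)` vanishes. -/
def GammaDef (z q p : ℂ) : Prop := ∀ j k : ℕ, 1 - z * q ^ j * p ^ k ≠ 0

/-- All elliptic gamma factors occurring in `Δ(u)` are defined at `u`. -/
def ellDeltaDef (ω1 ω2 ω3 : ℂ) (g : Fin 5 → ℂ) (u : ℂ) : Prop :=
  (∀ n : Fin 5,
    GammaDef (exp (2*(Real.pi:ℂ)*I*(g n + u)/ω2)) (exp (2*(Real.pi:ℂ)*I*ω1/ω2))
      (exp (2*(Real.pi:ℂ)*I*ω3/ω2)) ∧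
    GammaDef (exp (2*(Real.pi:ℂ)*I*(g n - u)/ω2)) (exp (2*(Real.pi:ℂ)*I*ω1/ω2))
      (exp (2*(Real.pi:ℂ)*I*ω3/ω2))) ∧
  GammaDef (exp (4*(Real.pi:ℂ)*I*u/ω2)) (exp (2*(Real.pi:ℂ)*I*ω1/ω2))
      (exp (2*(Real.pi:ℂ)*I*ω3/ω2)) ∧
  GammaDef (exp (-(4*(Real.pi:ℂ)*I*u)/ω2)) (exp (2*(Real.pi:ℂ)*I*ω1/ω2))
      (exp (2*(Real.pi:ℂ)*I*ω3/ω2)) ∧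
  GammaDef (exp (2*(Real.pi:ℂ)*I*((∑ n, g n) + u)/ω2)) (exp (2*(Real.pi:ℂ)*I*ω1/ω2))
      (exp (2*(Real.pi:ℂ)*I*ω3/ω2)) ∧
  GammaDef (exp (2*(Real.pi:ℂ)*I*((∑ n, g n) - u)/ω2)) (exp (2*(Real.pi:ℂ)*I*ω1/ω2))
      (exp (2*(Real.pi:ℂ)*I*ω3/ω2))

/-- The theta factors in the denominator of `R(u)` do not vanish. -/
def ellRDef (ω1 ω2 ω3 : ℂ) (g : Fin 5 → ℂ) (u : ℂ) : Prop :=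
  theta (exp (4*(Real.pi:ℂ)*I*u/ω2)) (exp (2*(Real.pi:ℂ)*I*ω3/ω2)) ≠ 0 ∧
  theta (exp (2*(Real.pi:ℂ)*I*(u + ∑ n, g n)/ω2)) (exp (2*(Real.pi:ℂ)*I*ω3/ω2)) ≠ 0 ∧
  ∀ n : Fin 5,
    theta (exp (2*(Real.pi:ℂ)*I*(u + ω1 - g n)/ω2)) (exp (2*(Real.pi:ℂ)*I*ω3/ω2)) ≠ 0

/-! Put `x = e^{2πi u/ω2}`, `aₙ = e^{2πi gₙ/ω2}`; then `u ↦ u + ω1, u + ω2, u + ω3` become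
`x ↦ q x, x, p x`. Splitting the double product defining `Γ` into rows gives
`Γ(q z) = θ(z;p) Γ(z)`, and with `θ(1/z) = -z⁻¹ θ(z)` each pair `Γ(b x) Γ(b/x)` of `Δ` is
multiplied by `-(q x/b) θ(b x)/θ(q x/b)` under `x ↦ q x`. Since `e^{2πi𝒜/ω2} = ∏ aₙ`, the
monomials `∏ₙ (q x/aₙ)` from the numerator and `q x²`, `q² x²`, `q x/∏ aₙ` from the
denominator leave exactly the factor `q`, and the theta quotients assemble to `R`. Under `x ↦ p x` the quasi-periodicity `θ(p z) = -z⁻¹ θ(z)` multiplies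
every theta quotient of `R` by a monomial, and these monomials cancel for the same reason. -/

section InfiniteProducts

variable {ι : Type*} {f : ι → ℂ}

lemma multipliable_one_sub_of_summable (hf : Summable fun i => ‖f i‖) :
    Multipliable fun i => 1 - f i := by
  simpa [sub_eq_add_neg] using multipliable_one_add_of_summable (f := fun i => -f i) (by simpa)

lemma tprod_one_sub_ne_zero_of_summable (hf : ∀ i, 1 - f i ≠ 0)
    (hs : Summable fun i => ‖f i‖) : ∏' i, (1 - f i) ≠ 0 := by
  simpa [sub_eq_add_neg] using tprod_one_add_ne_zero_of_summable (f := fun i => -f i)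
    (by simpa [sub_eq_add_neg] using hf) (by simpa)

end InfiniteProducts

lemma summable_norm_mul_geometric {p : ℂ} (hp : ‖p‖ < 1) (c : ℂ) :
    Summable fun n : ℕ => ‖c * p ^ n‖ := by
  simpa [norm_mul, norm_pow] using (summable_geometric_of_lt_one (norm_nonneg p) hp).mul_left ‖c‖

lemma summable_norm_mul_geometric_prod {q p : ℂ} (hq : ‖q‖ < 1) (hp : ‖p‖ < 1) (c : ℂ) :
    Summable fun jk : ℕ × ℕ => ‖c * q ^ jk.1 * p ^ jk.2‖ := by
  have := (summable_norm_mul_geometric hq c).mul_of_nonneg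
    (summable_geometric_of_lt_one (norm_nonneg p) hp) (fun _ => norm_nonneg _)
    (fun _ => by positivity)
  simpa [norm_mul, norm_pow] using this

noncomputable def qPoch2 (q p c : ℂ) : ℂ := ∏' jk : ℕ × ℕ, (1 - c * q ^ jk.1 * p ^ jk.2)

section Pochhammer

variable {q p : ℂ}

lemma multipliable_qPoch (hp : ‖p‖ < 1) (c : ℂ) : Multipliable fun n : ℕ => 1 - c * p ^ n :=
  multipliable_one_sub_of_summable (summable_norm_mul_geometric hp c)

lemma qPoch_eq_mul (hp : ‖p‖ < 1) (a : ℂ) : qPoch a p = (1 - a) * qPoch (a * p) p := by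
  rw [qPoch, tprod_eq_zero_mul' (f := fun n : ℕ => 1 - a * p ^ n), qPoch]
  · simp [pow_succ', mul_assoc]
  · simpa [pow_succ', mul_assoc] using multipliable_qPoch hp (a * p)

lemma multipliable_qPoch2 (hq : ‖q‖ < 1) (hp : ‖p‖ < 1) (c : ℂ) :
    Multipliable fun jk : ℕ × ℕ => 1 - c * q ^ jk.1 * p ^ jk.2 :=
  multipliable_one_sub_of_summable (summable_norm_mul_geometric_prod hq hp c)

lemma qPoch2_ne_zero (hq : ‖q‖ < 1) (hp : ‖p‖ < 1) {c : ℂ} (hc : GammaDef c q p) :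
    qPoch2 q p c ≠ 0 :=
  tprod_one_sub_ne_zero_of_summable (fun jk => hc jk.1 jk.2)
    (summable_norm_mul_geometric_prod hq hp c)

lemma hasProd_qPoch_qPoch2 (hq : ‖q‖ < 1) (hp : ‖p‖ < 1) (c : ℂ) :
    HasProd (fun j : ℕ => qPoch (c * q ^ j) p) (qPoch2 q p c) :=
  (multipliable_qPoch2 hq hp c).hasProd.prod_fiberwise fun j =>
    (multipliable_qPoch hp (c * q ^ j)).hasProd

lemma qPoch2_eq_mul (hq : ‖q‖ < 1) (hp : ‖p‖ < 1) (c : ℂ) :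
    qPoch2 q p c = qPoch c p * qPoch2 q p (c * q) := by
  have hshift : HasProd (fun j : ℕ => qPoch (c * q ^ (j + 1)) p) (qPoch2 q p (c * q)) := by
    have h := hasProd_qPoch_qPoch2 hq hp (c * q)
    simp only [mul_assoc, ← pow_succ'] at h
    exact h
  calc qPoch2 q p c = ∏' j : ℕ, qPoch (c * q ^ j) p := (hasProd_qPoch_qPoch2 hq hp c).tprod_eq.symm
    _ = qPoch (c * q ^ 0) p * ∏' j : ℕ, qPoch (c * q ^ (j + 1)) p :=
      tprod_eq_zero_mul' hshift.multipliable
    _ = qPoch c p * qPoch2 q p (c * q) := by rw [hshift.tprod_eq, pow_zero, mul_one]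

lemma ellGamma_eq_div (hq : ‖q‖ < 1) (hp : ‖p‖ < 1) {z : ℂ} (hz : GammaDef z q p) :
    ellGamma z q p = qPoch2 q p (z⁻¹ * q * p) / qPoch2 q p z := by
  have hnum : (fun jk : ℕ × ℕ => 1 - z⁻¹ * q * p * q ^ jk.1 * p ^ jk.2)
      = fun jk : ℕ × ℕ => 1 - z⁻¹ * q ^ (jk.1 + 1) * p ^ (jk.2 + 1) := by
    funext jk; ring
  rw [ellGamma, Multipliable.tprod_div₀ (hnum ▸ multipliable_qPoch2 hq hp _)
    (multipliable_qPoch2 hq hp z) (qPoch2_ne_zero hq hp hz), qPoch2, qPoch2, hnum]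

lemma theta_nome_mul (hp : ‖p‖ < 1) (hp0 : p ≠ 0) {z : ℂ} (hz : z ≠ 0) :
    theta (p * z) p = -z⁻¹ * theta z p := by
  rw [theta, theta, mul_inv, ← mul_assoc, mul_inv_cancel₀ hp0, one_mul,
    qPoch_eq_mul hp z⁻¹, qPoch_eq_mul hp z, mul_comm z⁻¹ p, mul_comm z p]
  field_simp
  ring

lemma theta_inv (hp : ‖p‖ < 1) {z : ℂ} (hz : z ≠ 0) : theta z⁻¹ p = -z⁻¹ * theta z p := by
  rw [theta, theta, inv_inv, qPoch_eq_mul hp z⁻¹, qPoch_eq_mul hp z, mul_comm z⁻¹ p, mul_comm z p]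
  field_simp
  ring

lemma theta_nome_mul_div {y z : ℂ} (hp : ‖p‖ < 1) (hp0 : p ≠ 0) (hy : y ≠ 0) (hz : z ≠ 0) :
    theta (p * y) p / theta (p * z) p = z / y * (theta y p / theta z p) := by
  rw [theta_nome_mul hp hp0 hy, theta_nome_mul hp hp0 hz, mul_div_mul_comm]
  field_simp

lemma GammaDef.mul_left {z q p : ℂ} (hz : GammaDef z q p) : GammaDef (q * z) q p := fun j k => by
  simpa [pow_succ, mul_assoc, mul_comm, mul_left_comm] using hz (j + 1) k

lemma ellGamma_mul_left (hq : ‖q‖ < 1) (hp : ‖p‖ < 1) (hq0 : q ≠ 0) {z : ℂ} (hz0 : z ≠ 0)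
    (hz : GammaDef z q p) : ellGamma (q * z) q p = theta z p * ellGamma z q p := by
  have hq' : (q * z)⁻¹ * q * p = z⁻¹ * p := by field_simp
  have hqPoch : qPoch z p ≠ 0 :=
    tprod_one_sub_ne_zero_of_summable (fun k => by simpa using hz 0 k)
      (summable_norm_mul_geometric hp z)
  rw [ellGamma_eq_div hq hp hz.mul_left, ellGamma_eq_div hq hp hz, hq', qPoch2_eq_mul hq hp z,
    qPoch2_eq_mul hq hp (z⁻¹ * p), theta, mul_comm q z, mul_comm p z⁻¹,
    show z⁻¹ * p * q = z⁻¹ * q * p by ring]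
  field_simp

end Pochhammer

noncomputable def pairGamma (q p b x : ℂ) : ℂ := ellGamma (b * x) q p * ellGamma (b / x) q p

noncomputable def pairFactor (q p b x : ℂ) : ℂ :=
  -(q * x / b) * (theta (b * x) p / theta (q * x / b) p)

section PairGamma

variable {q p b x : ℂ}

lemma ellGamma_mul_left_inv (hq : ‖q‖ < 1) (hp : ‖p‖ < 1) (hq0 : q ≠ 0) {y : ℂ} (hy : y ≠ 0)
    (hdef : GammaDef y⁻¹ q p) : ellGamma (q * y⁻¹) q p = -y⁻¹ * theta y p * ellGamma y⁻¹ q p := by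
  rw [ellGamma_mul_left hq hp hq0 (inv_ne_zero hy) hdef, theta_inv hp hy]

lemma pairGamma_mul_left_mul_theta (hq : ‖q‖ < 1) (hp : ‖p‖ < 1) (hq0 : q ≠ 0) (hb : b ≠ 0)
    (hx : x ≠ 0) (hdef : GammaDef (b * x) q p) (hdef' : GammaDef (b / (q * x)) q p) :
    pairGamma q p b (q * x) * theta (q * x / b) p =
      -(q * x / b) * theta (b * x) p * pairGamma q p b x := by
  have hy : q * x / b ≠ 0 := div_ne_zero (mul_ne_zero hq0 hx) hb
  rw [← inv_div] at hdef'
  rw [pairGamma, pairGamma, show b * (q * x) = q * (b * x) by ring, ← inv_div,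
    show b / x = q * (q * x / b)⁻¹ by field_simp,
    ellGamma_mul_left hq hp hq0 (mul_ne_zero hb hx) hdef,
    ellGamma_mul_left_inv hq hp hq0 hy hdef']
  field_simp

lemma theta_ne_zero_of_pairGamma_ne_zero (hq : ‖q‖ < 1) (hp : ‖p‖ < 1) (hq0 : q ≠ 0) (hb : b ≠ 0)
    (hx : x ≠ 0) (hdef' : GammaDef (b / (q * x)) q p) (hF : pairGamma q p b x ≠ 0) :
    theta (q * x / b) p ≠ 0 := by
  intro hθ
  rw [← inv_div] at hdef'
  apply hF
  rw [pairGamma, show b / x = q * (q * x / b)⁻¹ by field_simp,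
    ellGamma_mul_left_inv hq hp hq0 (div_ne_zero (mul_ne_zero hq0 hx) hb) hdef', hθ]
  ring

lemma pairGamma_mul_left (hq : ‖q‖ < 1) (hp : ‖p‖ < 1) (hq0 : q ≠ 0) (hb : b ≠ 0)
    (hx : x ≠ 0) (hdef : GammaDef (b * x) q p) (hdef' : GammaDef (b / (q * x)) q p)
    (hF : pairGamma q p b x ≠ 0) :
    pairGamma q p b (q * x) = pairFactor q p b x * pairGamma q p b x := by
  have hθ := theta_ne_zero_of_pairGamma_ne_zero hq hp hq0 hb hx hdef' hF
  rw [← mul_div_cancel_right₀ (pairGamma q p b (q * x)) hθ,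
    pairGamma_mul_left_mul_theta hq hp hq0 hb hx hdef hdef', pairFactor]
  ring

end PairGamma

/-- `Δ(u)` in the multiplicative variables `x = e^{2πi u/ω2}`, `aₙ = e^{2πi gₙ/ω2}`. -/
noncomputable def ellDeltaMul (q p : ℂ) (a : Fin 5 → ℂ) (x : ℂ) : ℂ :=
  (∏ n, pairGamma q p (a n) x) / (pairGamma q p 1 (x ^ 2) * pairGamma q p (∏ n, a n) x)

def ellDeltaMulDef (q p : ℂ) (a : Fin 5 → ℂ) (x : ℂ) : Prop :=
  (∀ n, GammaDef (a n * x) q p ∧ GammaDef (a n / x) q p) ∧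
  GammaDef (x ^ 2) q p ∧ GammaDef (x ^ 2)⁻¹ q p ∧
  GammaDef ((∏ n, a n) * x) q p ∧ GammaDef ((∏ n, a n) / x) q p

noncomputable def ellRMul (q p : ℂ) (a : Fin 5 → ℂ) (x : ℂ) : ℂ :=
  q * (theta ((q * x) ^ 2) p * theta (q * x / ∏ n, a n) p) /
      (theta (x ^ 2) p * theta ((∏ n, a n) * x) p) *
    ∏ n, theta (a n * x) p / theta (q * x / a n) p

section Multiplicative

variable {q p x : ℂ} {a : Fin 5 → ℂ}

lemma pairFactor_one (y : ℂ) : pairFactor q p 1 y = -(q * y) * (theta y p / theta (q * y) p) := by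
  simp [pairFactor]

lemma ellRMul_eq_pairFactor (hq0 : q ≠ 0) (hx : x ≠ 0) (ha : ∀ n, a n ≠ 0)
    (hθqx : theta (q * x ^ 2) p ≠ 0) :
    ellRMul q p a x = (∏ n, pairFactor q p (a n) x) /
      (pairFactor q p 1 (q * x ^ 2) * pairFactor q p 1 (x ^ 2) * pairFactor q p (∏ n, a n) x) := by
  have hA : ∏ n, a n ≠ 0 := Finset.prod_ne_zero_iff.mpr fun n _ => ha n
  have hprefactor : ∏ n, -(q * x / a n) = -(q * x) ^ 5 / ∏ n, a n := by
    simp only [← neg_div, Finset.prod_div_distrib, Finset.prod_const, Finset.card_univ,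
      Fintype.card_fin, Odd.neg_pow (by decide : Odd 5)]
  rw [ellRMul, pairFactor_one, pairFactor_one, pairFactor]
  simp only [pairFactor, Finset.prod_mul_distrib, hprefactor]
  field_simp

theorem ellDeltaMul_mul_left (hq : ‖q‖ < 1) (hp : ‖p‖ < 1) (hq0 : q ≠ 0) (hx : x ≠ 0)
    (ha : ∀ n, a n ≠ 0) (hdef : ellDeltaMulDef q p a x) (hdef' : ellDeltaMulDef q p a (q * x))
    (hne : ellDeltaMul q p a x ≠ 0) (hθx : theta (x ^ 2) p ≠ 0) :
    ellDeltaMul q p a (q * x) = ellRMul q p a x * ellDeltaMul q p a x := by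
  obtain ⟨hnum, hden⟩ := div_ne_zero_iff.mp hne
  have hA : ∏ n, a n ≠ 0 := Finset.prod_ne_zero_iff.mpr fun n _ => ha n
  have hx2 : x ^ 2 ≠ 0 := pow_ne_zero 2 hx
  have hqx2 : q * x ^ 2 ≠ 0 := mul_ne_zero hq0 hx2
  have hFa n : pairGamma q p (a n) x ≠ 0 := Finset.prod_ne_zero_iff.mp hnum n (Finset.mem_univ n)
  have hF1 : pairGamma q p 1 (x ^ 2) ≠ 0 := left_ne_zero_of_mul hden
  have hFA : pairGamma q p (∏ n, a n) x ≠ 0 := right_ne_zero_of_mul hden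
  have hdefx2 : GammaDef (1 * x ^ 2) q p := by simpa using hdef.2.1
  have hdefqx2 : GammaDef (1 * (q * x ^ 2)) q p := by simpa using hdef.2.1.mul_left
  have hdefqx2inv : GammaDef (1 / (q * (q * x ^ 2))) q p := by
    convert hdef'.2.2.1 using 1; ring
  have hdefx2inv : GammaDef (1 / (q * x ^ 2)) q p := by
    convert hdefqx2inv.mul_left using 1; field_simp
  have hθqx : theta (q * x ^ 2) p ≠ 0 := by
    simpa using theta_ne_zero_of_pairGamma_ne_zero hq hp hq0 one_ne_zero hx2 hdefx2inv hF1
  have hsq := pairGamma_mul_left hq hp hq0 one_ne_zero hx2 hdefx2 hdefx2inv hF1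
  have hF1' : pairGamma q p 1 (q * x ^ 2) ≠ 0 := by
    rw [hsq, pairFactor_one]
    exact mul_ne_zero (mul_ne_zero (neg_ne_zero.mpr hqx2) (div_ne_zero hθx hθqx)) hF1
  rw [ellDeltaMul, ellDeltaMul, show (q * x) ^ 2 = q * (q * x ^ 2) by ring,
    pairGamma_mul_left hq hp hq0 one_ne_zero hqx2 hdefqx2 hdefqx2inv hF1', hsq,
    pairGamma_mul_left hq hp hq0 hA hx hdef.2.2.2.1 hdef'.2.2.2.2 hFA,
    Finset.prod_congr rfl fun n _ =>
      pairGamma_mul_left hq hp hq0 (ha n) hx (hdef.1 n).1 (hdef'.1 n).2 (hFa n),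
    Finset.prod_mul_distrib, ellRMul_eq_pairFactor hq0 hx ha hθqx]
  ring

end Multiplicative

theorem ellRMul_mul_left {q p x : ℂ} {a : Fin 5 → ℂ} (hp : ‖p‖ < 1) (hp0 : p ≠ 0) (hq0 : q ≠ 0)
    (hx : x ≠ 0) (ha : ∀ n, a n ≠ 0) : ellRMul q p a (p * x) = ellRMul q p a x := by
  have hA : ∏ n, a n ≠ 0 := Finset.prod_ne_zero_iff.mpr fun n _ => ha n
  have hqx : q * x ≠ 0 := mul_ne_zero hq0 hx
  have hfactor n : theta (a n * (p * x)) p / theta (q * (p * x) / a n) p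
      = q / a n ^ 2 * (theta (a n * x) p / theta (q * x / a n) p) := by
    rw [show a n * (p * x) = p * (a n * x) by ring,
      show q * (p * x) / a n = p * (q * x / a n) by ring,
      theta_nome_mul_div hp hp0 (mul_ne_zero (ha n) hx) (div_ne_zero hqx (ha n))]
    field_simp
  have hquotient : theta ((q * (p * x)) ^ 2) p * theta (q * (p * x) / ∏ n, a n) p /
        (theta ((p * x) ^ 2) p * theta ((∏ n, a n) * (p * x)) p)
      = (∏ n, a n) ^ 2 / q ^ 5 * (theta ((q * x) ^ 2) p * theta (q * x / ∏ n, a n) p /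
        (theta (x ^ 2) p * theta ((∏ n, a n) * x) p)) := by
    rw [show (q * (p * x)) ^ 2 = p * (p * (q * x) ^ 2) by ring,
      show (p * x) ^ 2 = p * (p * x ^ 2) by ring,
      show q * (p * x) / ∏ n, a n = p * (q * x / ∏ n, a n) by ring,
      show (∏ n, a n) * (p * x) = p * ((∏ n, a n) * x) by ring, mul_div_mul_comm,
      theta_nome_mul_div hp hp0 (mul_ne_zero hp0 (pow_ne_zero 2 hqx))
        (mul_ne_zero hp0 (pow_ne_zero 2 hx)),
      theta_nome_mul_div hp hp0 (pow_ne_zero 2 hqx) (pow_ne_zero 2 hx),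
      theta_nome_mul_div hp hp0 (div_ne_zero hqx hA) (mul_ne_zero hA hx),
      mul_div_mul_comm (theta ((q * x) ^ 2) p)]
    field_simp
  rw [ellRMul, ellRMul, mul_div_assoc, hquotient, mul_div_assoc,
    Finset.prod_congr rfl fun n _ => hfactor n, Finset.prod_mul_distrib]
  simp only [Finset.prod_div_distrib, Finset.prod_const, Finset.card_univ, Fintype.card_fin,
    Finset.prod_pow]
  field_simp

noncomputable def expDiv (ω x : ℂ) : ℂ := exp (2 * (Real.pi : ℂ) * I * x / ω)

section ExpDiv

variable (ω : ℂ)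

lemma exp_eq_expDiv (x : ℂ) : exp (2 * (Real.pi : ℂ) * I * x / ω) = expDiv ω x := rfl

lemma exp_four_pi_mul_I_div (x : ℂ) : exp (4 * (Real.pi : ℂ) * I * x / ω) = expDiv ω x ^ 2 := by
  rw [expDiv, ← exp_nat_mul]
  ring_nf

lemma exp_neg_four_pi_mul_I_div (x : ℂ) :
    exp (-(4 * (Real.pi : ℂ) * I * x) / ω) = (expDiv ω x ^ 2)⁻¹ := by
  rw [← exp_four_pi_mul_I_div, ← exp_neg, neg_div]

lemma expDiv_ne_zero (x : ℂ) : expDiv ω x ≠ 0 := exp_ne_zero _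

lemma expDiv_add (x y : ℂ) : expDiv ω (x + y) = expDiv ω x * expDiv ω y := by
  rw [expDiv, expDiv, expDiv, ← exp_add]
  ring_nf

lemma expDiv_sub (x y : ℂ) : expDiv ω (x - y) = expDiv ω x / expDiv ω y := by
  rw [expDiv, expDiv, expDiv, ← exp_sub]
  ring_nf

lemma expDiv_sum {ι : Type*} (s : Finset ι) (f : ι → ℂ) :
    expDiv ω (∑ i ∈ s, f i) = ∏ i ∈ s, expDiv ω (f i) := by
  rw [expDiv, Finset.mul_sum, Finset.sum_div, exp_sum]
  rfl

lemma expDiv_add_self (x : ℂ) : expDiv ω (x + ω) = expDiv ω x := by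
  rcases eq_or_ne ω 0 with rfl | hω
  · simp [expDiv]
  · rw [expDiv_add, show expDiv ω ω = 1 by rw [expDiv, mul_div_assoc, div_self hω, mul_one,
      exp_two_pi_mul_I], mul_one]

lemma norm_expDiv_lt_one {x : ℂ} (h : 0 < (x / ω).im) : ‖expDiv ω x‖ < 1 := by
  rw [expDiv, norm_exp, Real.exp_lt_one_iff, mul_div_assoc, mul_comm _ (x / ω)]
  simpa [mul_re] using mul_pos h Real.two_pi_pos

end ExpDiv

section Additive

variable (ω1 ω2 ω3 : ℂ) (g : Fin 5 → ℂ) (u : ℂ)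

lemma ellDelta_eq_ellDeltaMul : ellDelta ω1 ω2 ω3 g u =
    ellDeltaMul (expDiv ω2 ω1) (expDiv ω2 ω3) (fun n => expDiv ω2 (g n)) (expDiv ω2 u) := by
  simp only [ellDelta, ellDeltaMul, pairGamma, exp_eq_expDiv, exp_four_pi_mul_I_div,
    exp_neg_four_pi_mul_I_div, expDiv_add, expDiv_sub, expDiv_sum]
  simp only [one_mul, one_div, mul_assoc]

lemma ellDeltaDef_iff : ellDeltaDef ω1 ω2 ω3 g u ↔
    ellDeltaMulDef (expDiv ω2 ω1) (expDiv ω2 ω3) (fun n => expDiv ω2 (g n)) (expDiv ω2 u) := by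
  simp only [ellDeltaDef, ellDeltaMulDef, exp_eq_expDiv, exp_four_pi_mul_I_div,
    exp_neg_four_pi_mul_I_div, expDiv_add, expDiv_sub, expDiv_sum]

lemma ellR_eq_ellRMul : ellR ω1 ω2 ω3 g u =
    ellRMul (expDiv ω2 ω1) (expDiv ω2 ω3) (fun n => expDiv ω2 (g n)) (expDiv ω2 u) := by
  simp only [ellR, ellRMul, add_comm u, exp_eq_expDiv, exp_four_pi_mul_I_div, expDiv_add,
    expDiv_sub, expDiv_sum]

end Additive

theorem stmt13_general (ω1 ω2 ω3 : ℂ)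
    (h12 : 0 < (ω1/ω2).im) (h32 : 0 < (ω3/ω2).im) (g : Fin 5 → ℂ) :
    (∀ u : ℂ, ellDeltaDef ω1 ω2 ω3 g u → ellDeltaDef ω1 ω2 ω3 g (u + ω1) →
      ellDelta ω1 ω2 ω3 g u ≠ 0 → ellRDef ω1 ω2 ω3 g u →
        ellDelta ω1 ω2 ω3 g (u + ω1) / ellDelta ω1 ω2 ω3 g u = ellR ω1 ω2 ω3 g u) ∧
    (∀ u : ℂ, ellRDef ω1 ω2 ω3 g u →
        ellR ω1 ω2 ω3 g (u + ω2) = ellR ω1 ω2 ω3 g u ∧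
        ellR ω1 ω2 ω3 g (u + ω3) = ellR ω1 ω2 ω3 g u) := by
  have hq := norm_expDiv_lt_one ω2 h12
  have hp := norm_expDiv_lt_one ω2 h32
  have ha n := expDiv_ne_zero ω2 (g n)
  refine ⟨fun u hdef hdef' hne hR => ?_, fun u _ => ⟨?_, ?_⟩⟩
  · have hshift : expDiv ω2 (u + ω1) = expDiv ω2 ω1 * expDiv ω2 u := by
      rw [add_comm, expDiv_add]
    rw [ellDeltaDef_iff] at hdef
    rw [ellDeltaDef_iff, hshift] at hdef'
    rw [ellDelta_eq_ellDeltaMul] at hne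
    have hθ : theta (expDiv ω2 u ^ 2) (expDiv ω2 ω3) ≠ 0 := by
      simpa only [exp_four_pi_mul_I_div, exp_eq_expDiv] using hR.1
    rw [ellDelta_eq_ellDeltaMul, ellDelta_eq_ellDeltaMul, hshift, ellR_eq_ellRMul, div_eq_iff hne]
    exact ellDeltaMul_mul_left hq hp (expDiv_ne_zero _ _) (expDiv_ne_zero _ _) ha hdef hdef' hne hθ
  · rw [ellR_eq_ellRMul, ellR_eq_ellRMul, expDiv_add_self]
  · rw [ellR_eq_ellRMul, ellR_eq_ellRMul, expDiv_add, mul_comm,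
      ellRMul_mul_left hp (expDiv_ne_zero _ _) (expDiv_ne_zero _ _) (expDiv_ne_zero _ _) ha]

/-- The ratio `Δ(u+ω1)/Δ(u)` equals `R(u)`, and `R` is an elliptic function of `u` with
periods `ω2` and `ω3`. -/
theorem stmt13 (ω1 ω2 ω3 : ℂ) (hω1 : ω1 ≠ 0) (hω2 : ω2 ≠ 0) (hω3 : ω3 ≠ 0)
    (h12 : 0 < (ω1/ω2).im) (h32 : 0 < (ω3/ω2).im) (g : Fin 5 → ℂ) :
    (∀ u : ℂ, ellDeltaDef ω1 ω2 ω3 g u → ellDeltaDef ω1 ω2 ω3 g (u + ω1) →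
      ellDelta ω1 ω2 ω3 g u ≠ 0 → ellRDef ω1 ω2 ω3 g u →
        ellDelta ω1 ω2 ω3 g (u + ω1) / ellDelta ω1 ω2 ω3 g u = ellR ω1 ω2 ω3 g u) ∧
    (∀ u : ℂ, ellRDef ω1 ω2 ω3 g u →
        ellR ω1 ω2 ω3 g (u + ω2) = ellR ω1 ω2 ω3 g u ∧
        ellR ω1 ω2 ω3 g (u + ω3) = ellR ω1 ω2 ω3 g u) :=
  stmt13_general ω1 ω2 ω3 h12 h32 g
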